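/- Let Z₁, Z₂, Z₃ be the left-invariant vector fields on SU(2) generated by the basis u₁, u₂, u₃ of su(2) with [u_i,u_j] = ε_{ijk}u_k, and let Z^α = f(α)Z'^α be the normalized symmetrized operators with f(α) = c√(α₁!α₂!α₃!/|α|!). Then for any smooth complex-valued functions f, g on SU(2), any k ∈ {1,2,3}, and any m ≥ 0: Σ_{|α|=m} ((Z^α Z_k f)(Z^α g) + (Z^α f)(Z^α Z_k g)) = Z_k(Σ_{|α|=m} (Z^α f)(Z^α g)). -/

import Mathlib

open Finset

/-- The Levi-Civita symbol on `Fin 3`, with `ε 0 1 2 = 1`. -/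
noncomputable def leviCivita (i j k : Fin 3) : ℝ :=
  (((j : ℝ) - (i : ℝ)) * ((k : ℝ) - (j : ℝ)) * ((k : ℝ) - (i : ℝ))) / 2

/-- The symmetrized operator `Z'^α`: the sum, over all words of length `|α|` in the
letters `1,2,3` containing the letter `i` exactly `α i` times, of the corresponding
composition of the operators `Z_i`. -/
noncomputable def symOp {A : Type*} [AddCommGroup A] [Module ℂ A]
    (Z : Fin 3 → Module.End ℂ A) (α : Fin 3 → ℕ) : Module.End ℂ A :=
  ∑ w ∈ Finset.univ.filter
      (fun w : Fin (α 0 + α 1 + α 2) → Fin 3 =>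
        ∀ i : Fin 3, (Finset.univ.filter (fun j => w j = i)).card = α i),
    (List.ofFn (fun j => Z (w j))).prod

/-- The normalized symmetrized operator `Z^α = f(α) Z'^α` with
`f(α) = c √(α₁!α₂!α₃!/|α|!)`. -/
noncomputable def normSymOp {A : Type*} [AddCommGroup A] [Module ℂ A]
    (c : ℝ) (Z : Fin 3 → Module.End ℂ A) (α : Fin 3 → ℕ) : Module.End ℂ A :=
  ((c * Real.sqrt (((α 0).factorial * (α 1).factorial * (α 2).factorial : ℝ)
      / ((α 0 + α 1 + α 2).factorial : ℝ)) : ℝ) : ℂ) • symOp Z α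

/-!
Write `Z'^α = ∑ Z_w` over the words `w` with letter counts `α`. Commuting `Z_k` through a word
changes one letter at a time, so `⁅Z'^α, Z_k⁆ = ∑_β M_{αβ} Z'^β`, where `M_{αβ}` sums `ε_{ikl} β_l`
over the letter changes `i → l` taking `α` to `β`. Comparing factorials gives
`α! M_{αβ} = -β! M_{βα}`, from the antisymmetry of `ε` in its outer indices.
Since `Z_k` is a derivation, the difference of the two sides is
`∑_α f(α)² (⁅Z'^α, Z_k⁆ f · Z'^α g + Z'^α f · ⁅Z'^α, Z_k⁆ g)`, and `f(α)² = c² α! / m!`;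
so it is a double sum of `α! M_{αβ}` against a term symmetric in `α, β`, hence zero.
-/

open scoped Nat

namespace Word

variable {ι : Type*} {n : ℕ}

def letterCount [DecidableEq ι] (w : Fin n → ι) (i : ι) : ℕ := #{j | w j = i}

lemma sum_letterCount [Fintype ι] [DecidableEq ι] (w : Fin n → ι) :
    ∑ i, letterCount w i = n := by
  simpa [letterCount] using (card_eq_sum_card_fiberwise (f := w) (s := univ) (t := univ)
    fun _ _ => mem_univ _).symm

lemma letterCount_update [DecidableEq ι] (w : Fin n → ι) (p : Fin n) (l : ι) :
    letterCount (Function.update w p l) + Pi.single (w p) 1 = letterCount w + Pi.single l 1 := by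
  ext i
  have count_eq (v : Fin n → ι) :
      letterCount v i =
        ∑ q ∈ univ.erase p, (if v q = i then 1 else 0) + if v p = i then 1 else 0 := by
    rw [letterCount, card_filter, sum_erase_add _ _ (mem_univ p)]
  have off_p : ∀ q ∈ univ.erase p, (if Function.update w p l q = i then 1 else 0)
      = if w q = i then 1 else 0 := fun q hq => by rw [Function.update_of_ne (ne_of_mem_erase hq)]
  simp only [Pi.add_apply, Pi.single_apply, count_eq, sum_congr rfl off_p, Function.update_self]
  split_ifs <;> grind

/-- Changing one letter `i` into `l` is a bijection between the two sets of marked words. -/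
lemma sum_sum_update [Fintype ι] [DecidableEq ι] {M : Type*} [AddCommMonoid M]
    (F : (Fin n → ι) → M) (α : ι → ℕ) (i l : ι) :
    ∑ w with letterCount w = α, ∑ p with w p = i, F (Function.update w p l)
      = ∑ v with letterCount v + Pi.single i 1 = α + Pi.single l 1, ∑ p with v p = l, F v := by
  rw [sum_sigma', sum_sigma']
  refine sum_nbij' (fun x => ⟨Function.update x.1 x.2 l, x.2⟩)
    (fun x => ⟨Function.update x.1 x.2 i, x.2⟩) ?_ ?_ ?_ ?_ (fun _ _ => rfl)
  · rintro ⟨w, p⟩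
    simp only [mem_sigma, mem_filter_univ, Function.update_self, and_true]
    rintro ⟨rfl, rfl⟩
    exact letterCount_update w p l
  · rintro ⟨v, p⟩
    simp only [mem_sigma, mem_filter_univ, Function.update_self, and_true]
    rintro ⟨hv, rfl⟩
    exact add_right_cancel ((letterCount_update v p i).trans hv)
  · rintro ⟨w, p⟩
    simp only [mem_sigma, mem_filter_univ, Function.update_idem]
    rintro ⟨-, rfl⟩
    simp
  · rintro ⟨v, p⟩
    simp only [mem_sigma, mem_filter_univ, Function.update_idem]
    rintro ⟨-, rfl⟩
    simp

section Operators

variable {R : Type*} [Ring R] (Z : ι → R)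

def wordProd (w : Fin n → ι) : R := (List.ofFn fun j => Z (w j)).prod

lemma wordProd_cons (a : ι) (v : Fin n → ι) : wordProd Z (Fin.cons a v) = Z a * wordProd Z v := by
  simp [wordProd, List.ofFn_succ]

lemma lie_wordProd [Fintype ι] [DecidableEq ι] {K : Type*} [CommRing K] [Algebra K R]
    {C : ι → ι → ι → K} (hC : ∀ i j, ⁅Z i, Z j⁆ = ∑ l, C i j l • Z l) (k : ι) (w : Fin n → ι) :
    ⁅wordProd Z w, Z k⁆ = ∑ p, ∑ l, C (w p) k l • wordProd Z (Function.update w p l) := by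
  induction n with
  | zero => simp [wordProd, Ring.lie_def]
  | succ n ih =>
    have lie_mul_left (a b c : R) : ⁅a * b, c⁆ = a * ⁅b, c⁆ + ⁅a, c⁆ * b := by
      simp only [Ring.lie_def]; noncomm_ring
    rw [← Fin.cons_self_tail w, wordProd_cons, lie_mul_left, ih, hC, Fin.sum_univ_succ, add_comm]
    simp only [mul_sum, sum_mul, mul_smul_comm, smul_mul_assoc, Fin.cons_zero, Fin.cons_succ,
      Fin.update_cons_zero, ← Fin.cons_update, ← wordProd_cons]

lemma finset_sum_lie {κ : Type*} (s : Finset κ) (f : κ → R) (a : R) :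
    ⁅∑ x ∈ s, f x, a⁆ = ∑ x ∈ s, ⁅f x, a⁆ := by
  simp only [Ring.lie_def, sum_mul, mul_sum, sum_sub_distrib]

variable [Fintype ι] [DecidableEq ι] {K : Type*} [CommRing K]

def symmetrizedProd (n : ℕ) (α : ι → ℕ) : R :=
  ∑ w : Fin n → ι with letterCount w = α, wordProd Z w

/-- The matrix of `ad (Z k)` on the symmetrized products, for structure constants `C`. -/
def lieCoeff (C : ι → ι → ι → K) (k : ι) (α β : ι → ℕ) : K :=
  ∑ i, ∑ l, if β + Pi.single i 1 = α + Pi.single l 1 then C i k l * β l else 0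

lemma lie_symmetrizedProd_eq_sum_update [Algebra K R] {C : ι → ι → ι → K}
    (hC : ∀ i j, ⁅Z i, Z j⁆ = ∑ l, C i j l • Z l) (k : ι) (α : ι → ℕ) :
    ⁅symmetrizedProd Z n α, Z k⁆ = ∑ i, ∑ l, C i k l •
      ∑ w : Fin n → ι with letterCount w = α, ∑ p with w p = i,
        wordProd Z (Function.update w p l) := by
  have lie_wordProd_fiberwise (w : Fin n → ι) : ⁅wordProd Z w, Z k⁆ = ∑ i, ∑ l, C i k l •
      ∑ p with w p = i, wordProd Z (Function.update w p l) := by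
    rw [lie_wordProd Z hC, ← sum_fiberwise univ w]
    refine sum_congr rfl fun i _ => ?_
    rw [sum_comm]
    refine sum_congr rfl fun l _ => ?_
    rw [smul_sum]
    exact sum_congr rfl fun p hp => by rw [(mem_filter.1 hp).2]
  rw [symmetrizedProd, finset_sum_lie, sum_congr rfl fun w _ => lie_wordProd_fiberwise w, sum_comm]
  refine sum_congr rfl fun i _ => ?_
  rw [sum_comm]
  exact sum_congr rfl fun l _ => (smul_sum ..).symm

lemma sum_lieCoeff_smul_symmetrizedProd [Algebra K R] (C : ι → ι → ι → K) (k : ι)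
    {T : Finset (ι → ℕ)} (hT : ∀ v : Fin n → ι, letterCount v ∈ T) (α : ι → ℕ) :
    ∑ β ∈ T, lieCoeff C k α β • symmetrizedProd Z n β = ∑ i, ∑ l, C i k l •
      ∑ v : Fin n → ι with letterCount v + Pi.single i 1 = α + Pi.single l 1,
        ∑ p with v p = l, wordProd Z v := by
  have sum_marked (v : Fin n → ι) (l : ι) :
      ∑ p with v p = l, wordProd Z v = (letterCount v l : K) • wordProd Z v := by
    rw [sum_const, Nat.cast_smul_eq_nsmul, letterCount]
  calc ∑ β ∈ T, lieCoeff C k α β • symmetrizedProd Z n β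
      = ∑ β ∈ T, ∑ v with letterCount v = β, lieCoeff C k α (letterCount v) • wordProd Z v :=
        sum_congr rfl fun β _ => by
          rw [symmetrizedProd, smul_sum]
          exact sum_congr rfl fun v hv => by rw [(mem_filter.1 hv).2]
    _ = ∑ v, lieCoeff C k α (letterCount v) • wordProd Z v :=
        sum_fiberwise_of_maps_to (fun v _ => hT v) _
    _ = _ := by
        simp only [lieCoeff, sum_smul]
        rw [sum_comm]
        refine sum_congr rfl fun i _ => ?_
        rw [sum_comm]
        refine sum_congr rfl fun l _ => ?_
        simp only [sum_marked, smul_sum, sum_filter, smul_ite, smul_zero, mul_smul, ite_smul,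
          zero_smul]

lemma lie_symmetrizedProd [Algebra K R] {C : ι → ι → ι → K}
    (hC : ∀ i j, ⁅Z i, Z j⁆ = ∑ l, C i j l • Z l) (k : ι)
    {T : Finset (ι → ℕ)} (hT : ∀ v : Fin n → ι, letterCount v ∈ T) (α : ι → ℕ) :
    ⁅symmetrizedProd Z n α, Z k⁆ = ∑ β ∈ T, lieCoeff C k α β • symmetrizedProd Z n β := by
  rw [lie_symmetrizedProd_eq_sum_update Z hC, sum_lieCoeff_smul_symmetrizedProd Z C k hT]
  simp only [sum_sum_update]

end Operators

lemma prod_factorial_add_single [Fintype ι] [DecidableEq ι] (α : ι → ℕ) (l : ι) :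
    ∏ j, ((α + Pi.single l 1 : ι → ℕ) j)! = (∏ j, (α j)!) * (α l + 1) := by
  have factorial_add_single (j : ι) :
      ((α + Pi.single l 1 : ι → ℕ) j)! = (α j)! * if j = l then α j + 1 else 1 := by
    by_cases h : j = l
    · subst h; simp [Nat.factorial_succ, mul_comm]
    · simp [h]
  simp only [factorial_add_single, prod_mul_distrib, prod_ite_eq', mem_univ, if_true]

/-- For `i ≠ l` both sides equal `∏ j, (γ j)!`, where `γ = α + e_l = β + e_i`. -/
lemma prod_factorial_mul_eq_of_add_single [Fintype ι] [DecidableEq ι] {α β : ι → ℕ}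
    {i l : ι} (h : β + Pi.single i 1 = α + Pi.single l 1) :
    (∏ j, (α j)!) * β l = (∏ j, (β j)!) * α i := by
  rcases eq_or_ne i l with rfl | hil
  · rw [add_right_cancel h]
  have hβ : β l = α l + 1 := by simpa [hil.symm] using congrFun h l
  have hα : α i = β i + 1 := by simpa [hil] using (congrFun h i).symm
  rw [hβ, hα, ← prod_factorial_add_single, ← prod_factorial_add_single, h]

lemma prod_factorial_mul_lieCoeff [Fintype ι] [DecidableEq ι] {K : Type*} [CommRing K]
    {C : ι → ι → ι → K} {k : ι} (hC : ∀ i l, C l k i = -C i k l) (α β : ι → ℕ) :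
    (∏ j, (α j)! : K) * lieCoeff C k α β = -((∏ j, (β j)! : K) * lieCoeff C k β α) := by
  rw [lieCoeff, lieCoeff]
  conv_rhs => rw [sum_comm]
  rw [mul_sum, mul_sum, ← sum_neg_distrib]
  refine sum_congr rfl fun i _ => ?_
  rw [mul_sum, mul_sum, ← sum_neg_distrib]
  refine sum_congr rfl fun l _ => ?_
  by_cases h : β + Pi.single i 1 = α + Pi.single l 1
  · have h' := congrArg (Nat.cast (R := K)) (prod_factorial_mul_eq_of_add_single h)
    push_cast at h'
    rw [if_pos h, if_pos h.symm, hC i l]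
    linear_combination C i k l * h'
  · rw [if_neg h, if_neg (Ne.symm h), mul_zero, mul_zero, neg_zero]

end Word

open Word

lemma sum_sum_eq_zero_of_antisymm {κ M : Type*} [AddCommGroup M] [IsAddTorsionFree M]
    (s : Finset κ) (F : κ → κ → M) (hF : ∀ a b, F a b = -F b a) :
    ∑ a ∈ s, ∑ b ∈ s, F a b = 0 := by
  refine self_eq_neg.1 ?_
  conv_lhs => rw [sum_comm]
  rw [← sum_neg_distrib]
  exact sum_congr rfl fun b _ => by rw [← sum_neg_distrib]; exact sum_congr rfl fun a _ => hF a b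

lemma leibniz_defect_smul {K A : Type*} [CommRing K] [Ring A] [Algebra K A] {D : Module.End K A}
    (hD : ∀ f g, D (f * g) = D f * g + f * D g) (r : K) (X : Module.End K A) (f g : A) :
    (r • X) (D f) * (r • X) g + (r • X) f * (r • X) (D g) - D ((r • X) f * (r • X) g)
      = r ^ 2 • (⁅X, D⁆ f * X g + X f * ⁅X, D⁆ g) := by
  simp only [LinearMap.smul_apply, smul_mul_smul_comm, map_smul, hD, Ring.lie_def,
    LinearMap.sub_apply, Module.End.mul_apply, sq]
  rw [← smul_add, ← smul_sub]
  congr 1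
  noncomm_ring

lemma leviCivita_swap (i k l : Fin 3) : leviCivita l k i = -leviCivita i k l := by
  simp only [leviCivita]; ring

lemma symOp_eq_symmetrizedProd {A : Type*} [AddCommGroup A] [Module ℂ A]
    (Z : Fin 3 → Module.End ℂ A) (α : Fin 3 → ℕ) :
    symOp Z α = symmetrizedProd Z (α 0 + α 1 + α 2) α := by
  simp only [symOp, symmetrizedProd, wordProd, letterCount, funext_iff]

lemma leibniz_defect_normSymOp {A : Type*} [CommRing A] [Algebra ℂ A]
    {Z : Fin 3 → Module.End ℂ A} {k : Fin 3}
    (hder : ∀ f g : A, Z k (f * g) = Z k f * g + f * Z k g)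
    (hcomm : ∀ i j, Z i * Z j - Z j * Z i = ∑ l, ((leviCivita i j l : ℝ) : ℂ) • Z l)
    (c : ℝ) {m : ℕ} {α : Fin 3 → ℕ} (hα : α ∈ Finset.Nat.antidiagonalTuple 3 m) (f g : A) :
    normSymOp c Z α (Z k f) * normSymOp c Z α g + normSymOp c Z α f * normSymOp c Z α (Z k g)
        - Z k (normSymOp c Z α f * normSymOp c Z α g)
      = ((c ^ 2 / m ! : ℝ) : ℂ) • ∑ β ∈ Finset.Nat.antidiagonalTuple 3 m,
          ((∏ j, (α j)! : ℂ) * lieCoeff (fun i j l => ((leviCivita i j l : ℝ) : ℂ)) k α β) •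
            (symmetrizedProd Z m β f * symmetrizedProd Z m α g
              + symmetrizedProd Z m α f * symmetrizedProd Z m β g) := by
  have hm : α 0 + α 1 + α 2 = m := by
    simpa [Fin.sum_univ_three] using Finset.Nat.mem_antidiagonalTuple.1 hα
  have hT (v : Fin m → Fin 3) : letterCount v ∈ Finset.Nat.antidiagonalTuple 3 m :=
    Finset.Nat.mem_antidiagonalTuple.2 (sum_letterCount v)
  have hr : ((c * √((α 0)! * (α 1)! * (α 2)! / m !) : ℝ) : ℂ) ^ 2
      = ((c ^ 2 / m ! : ℝ) : ℂ) * ∏ j, ((α j)! : ℂ) := by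
    rw [← Complex.ofReal_pow, mul_pow, Real.sq_sqrt (by positivity), Fin.prod_univ_three]
    push_cast
    ring
  rw [normSymOp, symOp_eq_symmetrizedProd, hm, leibniz_defect_smul hder,
    lie_symmetrizedProd Z hcomm k hT, hr, mul_smul]
  simp only [LinearMap.sum_apply, LinearMap.smul_apply, sum_mul, mul_sum, smul_mul_assoc,
    mul_smul_comm, ← sum_add_distrib, smul_sum, smul_add, mul_smul]

theorem leibniz_commutation_lemma_general {A : Type*} [CommRing A] [Algebra ℂ A]
    (Z : Fin 3 → Module.End ℂ A)
    (hder : ∀ i (f g : A), Z i (f * g) = Z i f * g + f * Z i g)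
    (hcomm : ∀ i j, Z i * Z j - Z j * Z i = ∑ k, ((leviCivita i j k : ℝ) : ℂ) • Z k)
    (c : ℝ) (m : ℕ) (k : Fin 3) (f g : A) :
    ∑ α ∈ Finset.Nat.antidiagonalTuple 3 m,
        (normSymOp c Z α (Z k f) * normSymOp c Z α g
          + normSymOp c Z α f * normSymOp c Z α (Z k g))
      = Z k (∑ α ∈ Finset.Nat.antidiagonalTuple 3 m,
          normSymOp c Z α f * normSymOp c Z α g) := by
  have := IsAddTorsionFree.of_isTorsionFree ℂ A
  rw [← sub_eq_zero, map_sum, ← sum_sub_distrib,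
    sum_congr rfl fun α hα => leibniz_defect_normSymOp (hder k) hcomm c hα f g, ← smul_sum,
    sum_sum_eq_zero_of_antisymm, smul_zero]
  intro α β
  rw [prod_factorial_mul_lieCoeff (fun i l => by exact_mod_cast leviCivita_swap i k l), neg_smul,
    add_comm]

/-- Leibniz-commutation lemma: for the normalized symmetrized left-invariant operators
`Z^α` on (smooth complex-valued functions on) SU(2),
`Σ_{|α|=m} ((Z^α Z_k f)(Z^α g) + (Z^α f)(Z^α Z_k g)) = Z_k Σ_{|α|=m} (Z^α f)(Z^α g)`. -/
theorem leibniz_commutation_lemma {A : Type*} [CommRing A] [Algebra ℂ A]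
    (Z : Fin 3 → Module.End ℂ A)
    (hder : ∀ i (f g : A), Z i (f * g) = Z i f * g + f * Z i g)
    (hcomm : ∀ i j, Z i * Z j - Z j * Z i = ∑ k, ((leviCivita i j k : ℝ) : ℂ) • Z k)
    (c : ℝ) (hc : 0 < c) (m : ℕ) (k : Fin 3) (f g : A) :
    ∑ α ∈ Finset.Nat.antidiagonalTuple 3 m,
        (normSymOp c Z α (Z k f) * normSymOp c Z α g
          + normSymOp c Z α f * normSymOp c Z α (Z k g))
      = Z k (∑ α ∈ Finset.Nat.antidiagonalTuple 3 m,
          normSymOp c Z α f * normSymOp c Z α g) :=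
  leibniz_commutation_lemma_general Z hder hcomm c m k f g
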